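/- arXiv:2204.08581 — 7 statements merged into one kernel-verified Lean document; each statement's English description precedes it below -/
import Mathlib

section
/- Let N ∈ ℕ, parameters γ ≥ 0, κ ∈ (0,1], η > 0, α > 0, and initial values c₀, p₀, d₀ ∈ ℝ, X₀ > 0. Let (u_n)_{n=1,...,N} be nonnegative real numbers (random or deterministic) with Σ_{n=1}^N u_n = X₀, and set X_n := X₀ − Σ_{j=1}^n u_j (so X_N = 0). Let (P_n)_{n=0,...,N} be any real sequence with P₀ = p₀ and increments ΔP_n := P_n − P_{n−1}, let (ε_n)_{n=1,...,N} be real numbers, define D₀ := d₀ and D_n := (1−κ)D_{n−1} + η u_n^α + ε_n, set M_n := P_n + γ Σ_{j=1}^n u_j (M₀ := P₀), and define the cash balance C₀ := c₀, C_n := C_{n−1} − ((M_{n−1} + (1−κ)D_{n−1} + M_n − ΔP_n + D_n − ε_n)/2)·u_n. Then the terminal cash position satisfies C_N = c₀ − (p₀ + (γ/2)X₀)·X₀ − Σ_{n=1}^{N−1} X_n ΔP_n − Σ_{n=1}^N ((1−κ)D_{n−1} + (η/2)u_n^α)·u_n. -/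
/-!
Mark the cash account to market: `G n := C n - P n X n + (γ/2) (X₀ - X n)²` is the cash left after
hypothetically buying the remaining inventory `X n` at the unaffected price `P n`, corrected by the
permanent-impact cost `(γ/2) (X₀ - X n)²` already paid. In period `n` the mid-price terms of the cash
outflow cancel against the change of these two corrections, so `G` only decreases by
`X n ΔP n + ((1 - κ) D (n-1) + (η/2) u n ^ α) u n`, and the formula is the telescoped sum of these
decrements, using `G 0 = c₀ - p₀ X₀` and `G N = C N + (γ/2) X₀²`.
-/

open Finset

namespace Finset

theorem sum_Icc_one_pred_sub {G : Type*} [AddCommGroup G] (f : ℕ → G) (N : ℕ) :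
    ∑ n ∈ Icc 1 N, (f (n - 1) - f n) = f 0 - f N := by
  induction N with
  | zero => simp
  | succ N ih => rw [sum_Icc_succ_top (by omega), ih, Nat.add_sub_cancel]; abel

theorem sum_Icc_one_sub_one_of_eq_zero {M : Type*} [AddCommMonoid M] {f : ℕ → M} {N : ℕ}
    (hN : f N = 0) : ∑ n ∈ Icc 1 (N - 1), f n = ∑ n ∈ Icc 1 N, f n := by
  cases N with
  | zero => rfl
  | succ N => rw [sum_Icc_succ_top (by omega), hN, add_zero, Nat.add_sub_cancel]

end Finset

theorem terminal_cash_position_general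
    (N : ℕ) (γ κ η α : ℝ)
    (c₀ p₀ X₀ : ℝ)
    (u : ℕ → ℝ)
    (husum : ∑ n ∈ Finset.Icc 1 N, u n = X₀)
    (X : ℕ → ℝ) (hX : ∀ n, X n = X₀ - ∑ j ∈ Finset.Icc 1 n, u j)
    (P : ℕ → ℝ) (hP0 : P 0 = p₀)
    (ε : ℕ → ℝ)
    (D : ℕ → ℝ)
    (hD : ∀ n ∈ Finset.Icc 1 N, D n = (1 - κ) * D (n - 1) + η * u n ^ α + ε n)
    (M : ℕ → ℝ) (hM0 : M 0 = P 0)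
    (hM : ∀ n ∈ Finset.Icc 1 N, M n = P n + γ * ∑ j ∈ Finset.Icc 1 n, u j)
    (C : ℕ → ℝ) (hC0 : C 0 = c₀)
    (hC : ∀ n ∈ Finset.Icc 1 N, C n = C (n - 1) -
      ((M (n - 1) + (1 - κ) * D (n - 1) + M n - (P n - P (n - 1)) + D n - ε n) / 2) * u n) :
    C N = c₀ - (p₀ + γ / 2 * X₀) * X₀
      - ∑ n ∈ Finset.Icc 1 (N - 1), X n * (P n - P (n - 1))
      - ∑ n ∈ Finset.Icc 1 N, ((1 - κ) * D (n - 1) + η / 2 * u n ^ α) * u n := by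
  have hX0 : X 0 = X₀ := by simp [hX]
  have hXN : X N = 0 := by rw [hX, husum, sub_self]
  have hMX : ∀ n ≤ N, M n = P n + γ * (X₀ - X n) := by
    rintro (_ | n) hn
    · simp [hM0, hX0]
    · rw [hM _ (mem_Icc.2 ⟨by omega, hn⟩), hX, sub_sub_cancel]
  have hu : ∀ n ∈ Icc 1 N, u n = X (n - 1) - X n := by
    rintro (_ | n) hn
    · simp at hn
    · rw [hX, hX, sum_Icc_succ_top (by omega), Nat.add_sub_cancel]; ring
  let G : ℕ → ℝ := fun n ↦ C n - P n * X n + γ / 2 * (X₀ - X n) ^ 2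
  have hG : ∀ n ∈ Icc 1 N, G (n - 1) - G n =
      X n * (P n - P (n - 1)) + ((1 - κ) * D (n - 1) + η / 2 * u n ^ α) * u n := by
    intro n hn
    have hn' : n ≤ N := (mem_Icc.1 hn).2
    simp only [G]
    rw [hC n hn, hD n hn, hMX n hn', hMX (n - 1) (by omega)]
    linear_combination (P (n - 1) + γ / 2 * (2 * X₀ - X (n - 1) - X n)) * hu n hn
  have htel := sum_Icc_one_pred_sub G N
  rw [sum_congr rfl hG, sum_add_distrib] at htel
  simp only [G, hX0, hXN, hP0, hC0] at htel
  rw [sum_Icc_one_sub_one_of_eq_zero (by rw [hXN, zero_mul])]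
  linarith

/-- **Terminal cash position of a buying program** (Lemma 2.1).
In the discrete-time optimal execution model with permanent impact `γ`,
resilience `κ`, instantaneous impact `η` and power price impact exponent `α`,
the terminal cash position of a buying schedule `(u n)` with `∑ u n = X₀`
(so that the remaining inventory `X N = 0`) is given by the stated formula. -/
theorem terminal_cash_position
    (N : ℕ) (γ κ η α : ℝ) (hγ : 0 ≤ γ) (hκ0 : 0 < κ) (hκ1 : κ ≤ 1)
    (hη : 0 < η) (hα : 0 < α)
    (c₀ p₀ d₀ X₀ : ℝ) (hX₀ : 0 < X₀)
    (u : ℕ → ℝ) (hu : ∀ n ∈ Finset.Icc 1 N, 0 ≤ u n)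
    (husum : ∑ n ∈ Finset.Icc 1 N, u n = X₀)
    (X : ℕ → ℝ) (hX : ∀ n, X n = X₀ - ∑ j ∈ Finset.Icc 1 n, u j)
    (P : ℕ → ℝ) (hP0 : P 0 = p₀)
    (ε : ℕ → ℝ)
    (D : ℕ → ℝ) (hD0 : D 0 = d₀)
    (hD : ∀ n ∈ Finset.Icc 1 N, D n = (1 - κ) * D (n - 1) + η * u n ^ α + ε n)
    (M : ℕ → ℝ) (hM0 : M 0 = P 0)
    (hM : ∀ n ∈ Finset.Icc 1 N, M n = P n + γ * ∑ j ∈ Finset.Icc 1 n, u j)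
    (C : ℕ → ℝ) (hC0 : C 0 = c₀)
    (hC : ∀ n ∈ Finset.Icc 1 N, C n = C (n - 1) -
      ((M (n - 1) + (1 - κ) * D (n - 1) + M n - (P n - P (n - 1)) + D n - ε n) / 2) * u n) :
    C N = c₀ - (p₀ + γ / 2 * X₀) * X₀
      - ∑ n ∈ Finset.Icc 1 (N - 1), X n * (P n - P (n - 1))
      - ∑ n ∈ Finset.Icc 1 N, ((1 - κ) * D (n - 1) + η / 2 * u n ^ α) * u n :=
  terminal_cash_position_general N γ κ η α c₀ p₀ X₀ u husum X hX P hP0 ε D hD M hM0 hM C hC0 hC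
end

section
/- Fix N ≥ 2, η > 0, ν ≥ 0 and κ ∈ (0,1) (strictly less than 1). Then the coefficients c_n defined by the backward recursion satisfy c_n < 0 for every n = 1,...,N−1. -/
/-!
Write `u = 2ν + 2a - ηb`, `v = 1 - b + 2ηc`, so that the common denominator is `Q = 2u + 2ηv`.
One step of the recursion acts on these quantities by
`u' = 2ν + ηκ b + 2ηκ uv / Q`, `v' = κ + 2ηκ(1 - κ)(v² / Q - c)`, `c' = (1 - κ)²(c - v² / Q)`.
Hence the conditions `b ≥ 0`, `c ≤ 0`, `u ≥ 0`, `v > 0`, which hold at the terminal time `N`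
since `κ ∈ (0, 1)`, propagate backwards, and they force `Q > 0` and then `c' < 0`.
-/

/-- The paper's `Q_{n+1}`, evaluated at `(a, b, c) = (a, b, c)_{n+1}`. -/
def denom (η ν a b c : ℝ) : ℝ := 2 * η + 4 * ν + 4 * a - 4 * η * b + 4 * η ^ 2 * c

structure CoeffBounds (η ν a b c : ℝ) : Prop where
  b_nonneg : 0 ≤ b
  c_nonpos : c ≤ 0
  u_nonneg : 0 ≤ 2 * ν + 2 * a - η * b
  v_pos : 0 < 1 - b + 2 * η * c

theorem coeffBounds_terminal {η κ ν : ℝ} (hη : 0 < η) (hκ0 : 0 < κ) (hκ1 : κ < 1) (hν : 0 ≤ ν) :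
    CoeffBounds η ν (η / 2) (1 - κ) 0 where
  b_nonneg := by linarith
  c_nonpos := le_rfl
  u_nonneg := by nlinarith
  v_pos := by linarith

theorem denom_eq (η ν a b c : ℝ) :
    denom η ν a b c = 2 * (2 * ν + 2 * a - η * b) + 2 * η * (1 - b + 2 * η * c) := by
  unfold denom; ring

namespace CoeffBounds

variable {η κ ν a b c a' b' c' : ℝ}

theorem denom_pos (h : CoeffBounds η ν a b c) (hη : 0 < η) : 0 < denom η ν a b c := by
  rw [denom_eq]
  have := h.u_nonneg
  have := mul_pos hη h.v_pos
  linarith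

theorem backward_step (h : CoeffBounds η ν a b c) (hη : 0 < η) (hκ0 : 0 < κ) (hκ1 : κ < 1)
    (hν : 0 ≤ ν)
    (ha' : a' = ν + a - (2 * ν + 2 * a - η * b) ^ 2 / denom η ν a b c)
    (hb' : b' = (1 - κ) * b +
      2 * (1 - κ) * (2 * ν + 2 * a - η * b) * (1 - b + 2 * η * c) / denom η ν a b c)
    (hc' : c' = (1 - κ) ^ 2 * c - (1 - κ) ^ 2 * (1 - b + 2 * η * c) ^ 2 / denom η ν a b c) :
    CoeffBounds η ν a' b' c' ∧ c' < 0 := by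
  have hQ := h.denom_pos hη
  have hQeq := denom_eq η ν a b c
  set Q := denom η ν a b c
  set u := 2 * ν + 2 * a - η * b
  set v := 1 - b + 2 * η * c
  have hu : 0 ≤ u := h.u_nonneg
  have hv : 0 < v := h.v_pos
  have hb := h.b_nonneg
  have hc := h.c_nonpos
  have hκ : 0 < 1 - κ := by linarith
  have hc'_eq : c' = (1 - κ) ^ 2 * (c - v ^ 2 / Q) := by rw [hc']; ring
  have hu'_eq : 2 * ν + 2 * a' - η * b' = 2 * ν + η * κ * b + 2 * η * κ * u * v / Q := by
    rw [ha', hb']; field_simp; rw [hQeq]; ring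
  have hv'_eq : 1 - b' + 2 * η * c' = κ + 2 * η * κ * (1 - κ) * (v ^ 2 / Q - c) := by
    rw [hb', hc']; field_simp; rw [hQeq]; ring
  have hgap : 0 < v ^ 2 / Q - c := by
    have : 0 < v ^ 2 / Q := by positivity
    linarith
  have hc'_neg : c' < 0 := by
    rw [hc'_eq]
    exact mul_neg_of_pos_of_neg (by positivity) (by linarith)
  refine ⟨⟨?_, hc'_neg.le, ?_, ?_⟩, hc'_neg⟩
  · rw [hb']; positivity
  · rw [hu'_eq]; positivity
  · rw [hv'_eq]; positivity

end CoeffBounds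

theorem coeff_c_neg_general
    (N : ℕ)
    (η κ ν : ℝ) (hη : 0 < η) (hκ0 : 0 < κ) (hκ1 : κ < 1) (hν : 0 ≤ ν)
    (a b c : ℕ → ℝ)
    (haN : a N = η / 2) (hbN : b N = 1 - κ) (hcN : c N = 0)
    (hrec : ∀ n, 1 ≤ n → n < N →
      a n = ν + a (n + 1) - (2 * ν + 2 * a (n + 1) - η * b (n + 1)) ^ 2 /
          (2 * η + 4 * ν + 4 * a (n + 1) - 4 * η * b (n + 1) + 4 * η ^ 2 * c (n + 1)) ∧
      b n = (1 - κ) * b (n + 1) +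
          2 * (1 - κ) * (2 * ν + 2 * a (n + 1) - η * b (n + 1)) *
            (1 - b (n + 1) + 2 * η * c (n + 1)) /
          (2 * η + 4 * ν + 4 * a (n + 1) - 4 * η * b (n + 1) + 4 * η ^ 2 * c (n + 1)) ∧
      c n = (1 - κ) ^ 2 * c (n + 1) -
          (1 - κ) ^ 2 * (1 - b (n + 1) + 2 * η * c (n + 1)) ^ 2 /
          (2 * η + 4 * ν + 4 * a (n + 1) - 4 * η * b (n + 1) + 4 * η ^ 2 * c (n + 1))) :
    ∀ n, 1 ≤ n → n ≤ N - 1 → c n < 0 := by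
  have step : ∀ n, 1 ≤ n → n < N → CoeffBounds η ν (a (n + 1)) (b (n + 1)) (c (n + 1)) →
      CoeffBounds η ν (a n) (b n) (c n) ∧ c n < 0 := fun n hn1 hnN h =>
    let ⟨ha, hb, hc⟩ := hrec n hn1 hnN
    h.backward_step hη hκ0 hκ1 hν ha hb hc
  have bounds : ∀ n, 1 ≤ n → n ≤ N → CoeffBounds η ν (a n) (b n) (c n) := fun n hn1 hnN =>
    Nat.decreasingInduction' (fun k hkN hnk h => (step k (hn1.trans hnk) hkN h).1) hnN
      (haN ▸ hbN ▸ hcN ▸ coeffBounds_terminal hη hκ0 hκ1 hν)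
  intro n hn1 hnN
  exact (step n hn1 (by omega) (bounds (n + 1) (by omega) (by omega))).2

/-- **Strict negativity of the coefficients `c n`** (existence of profitable round trips).
For `κ ∈ (0,1)` strictly less than one, the coefficients `c n` of the backward
recursion satisfy `c n < 0` for every `n = 1, …, N−1`. -/
theorem coeff_c_neg
    (N : ℕ) (hN : 2 ≤ N)
    (η κ ν : ℝ) (hη : 0 < η) (hκ0 : 0 < κ) (hκ1 : κ < 1) (hν : 0 ≤ ν)
    (a b c : ℕ → ℝ)
    (haN : a N = η / 2) (hbN : b N = 1 - κ) (hcN : c N = 0)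
    (hrec : ∀ n, 1 ≤ n → n < N →
      a n = ν + a (n + 1) - (2 * ν + 2 * a (n + 1) - η * b (n + 1)) ^ 2 /
          (2 * η + 4 * ν + 4 * a (n + 1) - 4 * η * b (n + 1) + 4 * η ^ 2 * c (n + 1)) ∧
      b n = (1 - κ) * b (n + 1) +
          2 * (1 - κ) * (2 * ν + 2 * a (n + 1) - η * b (n + 1)) *
            (1 - b (n + 1) + 2 * η * c (n + 1)) /
          (2 * η + 4 * ν + 4 * a (n + 1) - 4 * η * b (n + 1) + 4 * η ^ 2 * c (n + 1)) ∧
      c n = (1 - κ) ^ 2 * c (n + 1) -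
          (1 - κ) ^ 2 * (1 - b (n + 1) + 2 * η * c (n + 1)) ^ 2 /
          (2 * η + 4 * ν + 4 * a (n + 1) - 4 * η * b (n + 1) + 4 * η ^ 2 * c (n + 1))) :
    ∀ n, 1 ≤ n → n ≤ N - 1 → c n < 0 :=
  coeff_c_neg_general N η κ ν hη hκ0 hκ1 hν a b c haN hbN hcN hrec
end

section
/- In the setting of the deterministic (σ = 0) linear problem, with (u°_n)_{n=1,...,N} the deterministic feedback sequence and X°_n, D°_n the associated inventory and deviation states (X°₀ = X₀, D°₀ = d₀, X°_n = X°_{n−1} − u°_n, D°_n = (1−κ)D°_{n−1} + η u°_n), the optimally controlled states admit the affine representations X°_n = 𝔞^x_{n+1}·u°₁ + 𝔟^x_{n+1}·d₀ + 𝔠^x_{n+1}·X₀ and D°_n = 𝔞^d_{n+1}·u°₁ + 𝔟^d_{n+1}·d₀ + 𝔠^d_{n+1}·X₀ for all n = 0,...,N−1. -/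
/-!
The Riccati recursion preserves `b = 2(1-κ)a/η` and `c = (1-κ)²(2a-η)/(2η²)`, i.e. the value
function is `a (x + (1-κ)d/η)² - (1-κ)² d²/(2η)`. Hence, with `w = X + (1-κ)D/η` and the gain
`θ_n = 2(ν + κ a_{n+1}) / (ηκ(2-κ) + 2ν + 2κ² a_{n+1})`, the feedback is
`u_n = θ_n w_{n-1} - (1-κ) D_{n-1}/η`, so `D_n = η θ_n w_{n-1}` and `w_n = (1 - κ θ_n) w_{n-1}`.
Through the gain the Riccati step reads `θ_{n+1} δ = 2κ a_{n+1} + 2ν(1-κ)`, where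
`δ = ηκ(2-κ) + 2ν(1-κ)` is the denominator of `ã, b̃, c̃`; this yields the stationary relation
`u_i = ã u_{i-1} + b̃ D_{i-2} + c̃ X_{i-2}`. Writing `X` and `D` as sums of past controls turns it into
a Volterra recursion for `u`, solved by `u₁ 𝔞 + d₀ 𝔟 + X₀ 𝔠`; summing the controls gives the states.
-/

open Finset

noncomputable section

def IsRiccatiStep (η κ ν a' b' c' a b c : ℝ) : Prop :=
  a = ν + a' - (2 * ν + 2 * a' - η * b') ^ 2 /
      (2 * η + 4 * ν + 4 * a' - 4 * η * b' + 4 * η ^ 2 * c') ∧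
    b = (1 - κ) * b' + 2 * (1 - κ) * (2 * ν + 2 * a' - η * b') * (1 - b' + 2 * η * c') /
      (2 * η + 4 * ν + 4 * a' - 4 * η * b' + 4 * η ^ 2 * c') ∧
    c = (1 - κ) ^ 2 * c' - (1 - κ) ^ 2 * (1 - b' + 2 * η * c') ^ 2 /
      (2 * η + 4 * ν + 4 * a' - 4 * η * b' + 4 * η ^ 2 * c')

def feedback (η κ ν a b c x d : ℝ) : ℝ :=
  ((2 * ν + 2 * a - η * b) * x - (1 - b + 2 * η * c) * (1 - κ) * d) /
    (η + 2 * ν + 2 * a - 2 * η * b + 2 * η ^ 2 * c)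

def IsRiccatiTriple (η κ a b c : ℝ) : Prop :=
  b = 2 * (1 - κ) * a / η ∧ c = (1 - κ) ^ 2 * (2 * a - η) / (2 * η ^ 2)

def feedbackDenom (η κ ν a : ℝ) : ℝ := η * κ * (2 - κ) + 2 * ν + 2 * κ ^ 2 * a

def feedbackGain (η κ ν a : ℝ) : ℝ := 2 * (ν + κ * a) / feedbackDenom η κ ν a

def coeffDenom (η κ ν : ℝ) : ℝ := 2 * κ * η - κ ^ 2 * η - 2 * κ * ν + 2 * ν

end

section Riccati

variable {η κ ν : ℝ}

lemma feedbackDenom_pos (hη : 0 < η) (hκ0 : 0 < κ) (hκ1 : κ ≤ 1) (hν : 0 ≤ ν) {a : ℝ}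
    (ha : 0 ≤ a) : 0 < feedbackDenom η κ ν a := by
  have : 0 < η * κ * (2 - κ) := mul_pos (mul_pos hη hκ0) (by linarith)
  unfold feedbackDenom
  positivity

lemma coeffDenom_pos (hη : 0 < η) (hκ0 : 0 < κ) (hκ1 : κ ≤ 1) (hν : 0 ≤ ν) :
    0 < coeffDenom η κ ν := by
  have h1 : 0 < η * κ * (2 - κ) := mul_pos (mul_pos hη hκ0) (by linarith)
  have h2 : 0 ≤ ν * (1 - κ) := mul_nonneg hν (by linarith)
  unfold coeffDenom
  linarith

lemma IsRiccatiTriple.feedback_denom_eq (hη : 0 < η) {a b c : ℝ} (h : IsRiccatiTriple η κ a b c) :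
    η + 2 * ν + 2 * a - 2 * η * b + 2 * η ^ 2 * c = feedbackDenom η κ ν a := by
  obtain ⟨rfl, rfl⟩ := h
  unfold feedbackDenom
  field_simp
  ring

lemma IsRiccatiTriple.riccati_denom_eq (hη : 0 < η) {a b c : ℝ} (h : IsRiccatiTriple η κ a b c) :
    2 * η + 4 * ν + 4 * a - 4 * η * b + 4 * η ^ 2 * c = 2 * feedbackDenom η κ ν a := by
  linear_combination 2 * h.feedback_denom_eq hη

lemma IsRiccatiTriple.feedback_eq (hη : 0 < η) (hκ0 : 0 < κ) (hκ1 : κ ≤ 1) (hν : 0 ≤ ν)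
    {a b c : ℝ} (ha : 0 < a) (h : IsRiccatiTriple η κ a b c) (x d : ℝ) :
    feedback η κ ν a b c x d =
      feedbackGain η κ ν a * (x + (1 - κ) * d / η) - (1 - κ) * d / η := by
  have hγ := (feedbackDenom_pos hη hκ0 hκ1 hν ha.le).ne'
  rw [feedback, h.feedback_denom_eq hη, feedbackGain]
  obtain ⟨rfl, rfl⟩ := h
  field_simp
  unfold feedbackDenom
  ring

lemma IsRiccatiStep.eq_div (hη : 0 < η) (hκ0 : 0 < κ) (hκ1 : κ ≤ 1) (hν : 0 ≤ ν)
    {a' b' c' a b c : ℝ} (ha' : 0 < a') (h' : IsRiccatiTriple η κ a' b' c')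
    (h : IsRiccatiStep η κ ν a' b' c' a b c) :
    a = (η * κ * (2 - κ) * (ν + a') + 2 * ν * (1 - κ) ^ 2 * a') / feedbackDenom η κ ν a' := by
  have hγ := (feedbackDenom_pos hη hκ0 hκ1 hν ha'.le).ne'
  rw [h.1, h'.riccati_denom_eq hη]
  obtain ⟨rfl, rfl⟩ := h'
  field_simp
  unfold feedbackDenom
  ring

lemma IsRiccatiStep.pos_and_isRiccatiTriple (hη : 0 < η) (hκ0 : 0 < κ) (hκ1 : κ ≤ 1)
    (hν : 0 ≤ ν) {a' b' c' a b c : ℝ} (ha' : 0 < a') (h' : IsRiccatiTriple η κ a' b' c')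
    (h : IsRiccatiStep η κ ν a' b' c' a b c) : 0 < a ∧ IsRiccatiTriple η κ a b c := by
  have hγ := feedbackDenom_pos hη hκ0 hκ1 hν ha'.le
  have hQ := h'.riccati_denom_eq (ν := ν) hη
  have ha := h.eq_div hη hκ0 hκ1 hν ha' h'
  obtain ⟨-, hb, hc⟩ := h
  obtain ⟨rfl, rfl⟩ := h'
  refine ⟨?_, ?_, ?_⟩
  · have : 0 < η * κ * (2 - κ) := mul_pos (mul_pos hη hκ0) (by linarith)
    rw [ha]
    positivity
  · rw [hb, hQ, ha]
    field_simp
    unfold feedbackDenom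
    ring
  · rw [hc, hQ, ha]
    field_simp
    unfold feedbackDenom
    ring

lemma IsRiccatiStep.feedbackGain_mul_coeffDenom (hη : 0 < η) (hκ0 : 0 < κ) (hκ1 : κ ≤ 1)
    (hν : 0 ≤ ν) {a' b' c' a b c : ℝ} (ha' : 0 < a') (h' : IsRiccatiTriple η κ a' b' c')
    (h : IsRiccatiStep η κ ν a' b' c' a b c) :
    feedbackGain η κ ν a' * coeffDenom η κ ν = 2 * κ * a + 2 * ν * (1 - κ) := by
  have hγ := (feedbackDenom_pos hη hκ0 hκ1 hν ha'.le).ne'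
  rw [h.eq_div hη hκ0 hκ1 hν ha' h', feedbackGain, coeffDenom]
  field_simp
  unfold feedbackDenom
  ring

lemma riccati_backward (hη : 0 < η) (hκ0 : 0 < κ) (hκ1 : κ ≤ 1) (hν : 0 ≤ ν) {N : ℕ}
    {a b c : ℕ → ℝ} (haN : a N = η / 2) (hbN : b N = 1 - κ) (hcN : c N = 0)
    (hrec : ∀ n, 1 ≤ n → n < N →
      IsRiccatiStep η κ ν (a (n + 1)) (b (n + 1)) (c (n + 1)) (a n) (b n) (c n)) :
    ∀ n, 1 ≤ n → n ≤ N → 0 < a n ∧ IsRiccatiTriple η κ (a n) (b n) (c n) := by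
  intro n hn hnN
  refine Nat.decreasingInduction' (fun k hkN hnk ih => ?_) hnN ?_
  · exact (hrec k (by omega) hkN).pos_and_isRiccatiTriple hη hκ0 hκ1 hν ih.1 ih.2
  · rw [haN, hbN, hcN]
    exact ⟨by positivity, by field_simp, by ring⟩

/-- With `w = x + (1-κ)d/η`, the hypotheses give `u₂ = 2κ²α w / feedbackDenom η κ ν α`. -/
lemma feedback_two_step (hη : 0 < η) (hκ0 : 0 < κ) (hκ1 : κ ≤ 1) (hν : 0 ≤ ν)
    {α α' x d u₁ u₂ : ℝ} (hα : 0 < α)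
    (hgain : feedbackGain η κ ν α' * coeffDenom η κ ν = 2 * κ * α + 2 * ν * (1 - κ))
    (hu₁ : u₁ = feedbackGain η κ ν α * (x + (1 - κ) * d / η) - (1 - κ) * d / η)
    (hu₂ : u₂ = feedbackGain η κ ν α' * (x - u₁ + (1 - κ) * ((1 - κ) * d + η * u₁) / η) -
      (1 - κ) * ((1 - κ) * d + η * u₁) / η) :
    u₂ = κ * (2 * κ * η - κ ^ 2 * η + 2 * ν) / coeffDenom η κ ν * u₁ +
      κ ^ 2 * (2 - 3 * κ + κ ^ 2) / coeffDenom η κ ν * d +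
      -2 * κ * ν / coeffDenom η κ ν * x := by
  have hγ := (feedbackDenom_pos hη hκ0 hκ1 hν hα.le).ne'
  have hδ := (coeffDenom_pos hη hκ0 hκ1 hν).ne'
  rw [← eq_div_iff hδ] at hgain
  rw [hu₂, hgain, hu₁, feedbackGain]
  field_simp
  unfold coeffDenom feedbackDenom
  ring

lemma controls_two_step (hη : 0 < η) (hκ0 : 0 < κ) (hκ1 : κ ≤ 1) (hν : 0 ≤ ν) {N : ℕ}
    {a b c u X D : ℕ → ℝ} (haN : a N = η / 2) (hbN : b N = 1 - κ) (hcN : c N = 0)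
    (hrec : ∀ n, 1 ≤ n → n < N →
      IsRiccatiStep η κ ν (a (n + 1)) (b (n + 1)) (c (n + 1)) (a n) (b n) (c n))
    (hu : ∀ n, 1 ≤ n → n ≤ N - 1 →
      u n = feedback η κ ν (a (n + 1)) (b (n + 1)) (c (n + 1)) (X (n - 1)) (D (n - 1)))
    (hXrec : ∀ n, 1 ≤ n → n ≤ N → X n = X (n - 1) - u n)
    (hDrec : ∀ n, 1 ≤ n → n ≤ N → D n = (1 - κ) * D (n - 1) + η * u n) :
    ∀ i, 2 ≤ i → i ≤ N - 1 →
      u i = κ * (2 * κ * η - κ ^ 2 * η + 2 * ν) / coeffDenom η κ ν * u (i - 1) +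
        κ ^ 2 * (2 - 3 * κ + κ ^ 2) / coeffDenom η κ ν * D (i - 2) +
        -2 * κ * ν / coeffDenom η κ ν * X (i - 2) := by
  have hinv := riccati_backward hη hκ0 hκ1 hν haN hbN hcN hrec
  have hfeedback : ∀ n, 1 ≤ n → n ≤ N - 1 → u n = feedbackGain η κ ν (a (n + 1)) *
      (X (n - 1) + (1 - κ) * D (n - 1) / η) - (1 - κ) * D (n - 1) / η := by
    intro n hn hnN
    obtain ⟨ha, h⟩ := hinv (n + 1) (by omega) (by omega)
    rw [hu n hn hnN, h.feedback_eq hη hκ0 hκ1 hν ha]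
  intro i hi hiN
  obtain ⟨m, rfl⟩ : ∃ m, i = m + 2 := ⟨i - 2, by omega⟩
  obtain ⟨ha₂, h₂⟩ := hinv (m + 3) (by omega) (by omega)
  have hgain := (hrec (m + 2) (by omega) (by omega)).feedbackGain_mul_coeffDenom
    hη hκ0 hκ1 hν ha₂ h₂
  have hu₂ := hfeedback (m + 2) (by omega) hiN
  rw [show m + 2 - 1 = m + 1 by omega, hXrec (m + 1) (by omega) (by omega),
    hDrec (m + 1) (by omega) (by omega), Nat.add_sub_cancel] at hu₂
  rw [show m + 2 - 1 = m + 1 by omega, Nat.add_sub_cancel]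
  exact feedback_two_step hη hκ0 hκ1 hν (hinv (m + 2) (by omega) (by omega)).1 hgain
    (hfeedback (m + 1) (by omega) (by omega)) hu₂

end Riccati

section Recursion

variable {M : ℕ} {u : ℕ → ℝ}

lemma eq_sub_sum_Icc_of_eq_sub {X : ℕ → ℝ} (h : ∀ n, 1 ≤ n → n ≤ M → X n = X (n - 1) - u n) :
    ∀ n ≤ M, X n = X 0 - ∑ j ∈ Icc 1 n, u j := by
  intro n hn
  induction n with
  | zero => simp
  | succ n ih =>
    rw [h (n + 1) (by omega) hn, Nat.add_sub_cancel, ih (by omega), sum_Icc_succ_top (by omega)]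
    ring

lemma eq_pow_mul_add_sum_Icc_of_eq_mul_add {D : ℕ → ℝ} {s η : ℝ}
    (h : ∀ n, 1 ≤ n → n ≤ M → D n = s * D (n - 1) + η * u n) :
    ∀ n ≤ M, D n = s ^ n * D 0 + ∑ j ∈ Icc 1 n, η * s ^ (n - j) * u j := by
  intro n hn
  induction n with
  | zero => simp
  | succ n ih =>
    have hshift : ∀ j ∈ Icc 1 n, s * (η * s ^ (n - j) * u j) = η * s ^ (n + 1 - j) * u j := by
      intro j hj
      rw [Nat.sub_add_comm (mem_Icc.mp hj).2, pow_succ]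
      ring
    rw [h (n + 1) (by omega) hn, Nat.add_sub_cancel, ih (by omega), sum_Icc_succ_top (by omega),
      Nat.sub_self, pow_zero, mul_add, mul_sum, sum_congr rfl hshift, pow_succ]
    ring

lemma sum_mul_add_mul_add_mul (S : Finset ℕ) (w A B C : ℕ → ℝ) (p q t : ℝ) :
    ∑ j ∈ S, w j * (p * A j + q * B j + t * C j) =
      p * ∑ j ∈ S, w j * A j + q * ∑ j ∈ S, w j * B j + t * ∑ j ∈ S, w j * C j := by
  simp only [mul_sum, ← sum_add_distrib]
  exact sum_congr rfl fun _ _ => by ring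

lemma sum_Icc_mul_eq_of_forall_eq {A B C : ℕ → ℝ} {p q t : ℝ}
    (h : ∀ i, 1 ≤ i → i ≤ M → u i = p * A i + q * B i + t * C i) {n : ℕ} (hn : n ≤ M)
    (w : ℕ → ℝ) :
    ∑ j ∈ Icc 1 n, w j * u j =
      p * ∑ j ∈ Icc 1 n, w j * A j + q * ∑ j ∈ Icc 1 n, w j * B j +
        t * ∑ j ∈ Icc 1 n, w j * C j := by
  rw [← sum_mul_add_mul_add_mul]
  refine sum_congr rfl fun j hj => ?_
  rw [h j (mem_Icc.mp hj).1 ((mem_Icc.mp hj).2.trans hn)]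

def IsVolterraSolution (r : ℝ) (k : ℕ → ℕ → ℝ) (f : ℕ → ℝ) (M : ℕ) (u : ℕ → ℝ) : Prop :=
  ∀ i, 2 ≤ i → i ≤ M → u i = r * u (i - 1) + f i + ∑ j ∈ Icc 1 (i - 2), k i j * u j

variable {r : ℝ} {k : ℕ → ℕ → ℝ}

lemma IsVolterraSolution.of_eq_two {f : ℕ → ℝ} (h2 : u 2 = r * u 1 + f 2)
    (h : ∀ i, 3 ≤ i → i ≤ M → u i = r * u (i - 1) + f i + ∑ j ∈ Icc 1 (i - 2), k i j * u j) :
    IsVolterraSolution r k f M u := by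
  intro i hi hiM
  rcases hi.eq_or_lt with rfl | hi
  · simpa using h2
  · exact h i hi hiM

lemma IsVolterraSolution.eq_of_eq_one {f g v : ℕ → ℝ}
    (hu : IsVolterraSolution r k f M u) (hv : IsVolterraSolution r k g M v)
    (hfg : ∀ i, f i = g i) (h1 : u 1 = v 1) : ∀ i, 1 ≤ i → i ≤ M → u i = v i := by
  intro i
  induction i using Nat.strong_induction_on with
  | _ i ih =>
    intro hi hiM
    rcases (show i = 1 ∨ 2 ≤ i by omega) with rfl | hi2
    · exact h1
    rw [hu i hi2 hiM, hv i hi2 hiM, ih (i - 1) (by omega) (by omega) (by omega), hfg]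
    congr 1
    refine sum_congr rfl fun j hj => ?_
    rw [ih j (by simp at hj; omega) (mem_Icc.mp hj).1 (by simp at hj; omega)]

lemma IsVolterraSolution.linear_comb {fA fB fC A B C : ℕ → ℝ}
    (hA : IsVolterraSolution r k fA M A) (hB : IsVolterraSolution r k fB M B)
    (hC : IsVolterraSolution r k fC M C) (p q t : ℝ) :
    IsVolterraSolution r k (fun i => p * fA i + q * fB i + t * fC i) M
      (fun i => p * A i + q * B i + t * C i) := by
  intro i hi hiM
  beta_reduce
  rw [sum_mul_add_mul_add_mul, hA i hi hiM, hB i hi hiM, hC i hi hiM]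
  ring

lemma isVolterraSolution_of_two_step {X D : ℕ → ℝ} {s η α β γ : ℝ}
    (hX : ∀ n ≤ M, X n = X 0 - ∑ j ∈ Icc 1 n, u j)
    (hD : ∀ n ≤ M, D n = s ^ n * D 0 + ∑ j ∈ Icc 1 n, η * s ^ (n - j) * u j)
    (h : ∀ i, 2 ≤ i → i ≤ M → u i = α * u (i - 1) + β * D (i - 2) + γ * X (i - 2)) :
    IsVolterraSolution α (fun i j => β * η * s ^ (i - 2 - j) - γ)
      (fun i => β * s ^ (i - 2) * D 0 + γ * X 0) M u := by
  intro i hi hiM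
  have hkernel : ∑ j ∈ Icc 1 (i - 2), (β * η * s ^ (i - 2 - j) - γ) * u j =
      β * ∑ j ∈ Icc 1 (i - 2), η * s ^ (i - 2 - j) * u j - γ * ∑ j ∈ Icc 1 (i - 2), u j := by
    simp only [sub_mul, sum_sub_distrib, mul_sum, mul_assoc]
  rw [h i hi hiM, hD (i - 2) (by omega), hX (i - 2) (by omega), hkernel]
  ring

end Recursion

theorem deterministic_states_representation_general
    (N : ℕ)
    (η κ ν : ℝ) (hη : 0 < η) (hκ0 : 0 < κ) (hκ1 : κ ≤ 1) (hν : 0 ≤ ν)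
    (X₀ d₀ : ℝ)
    (a b c : ℕ → ℝ)
    (haN : a N = η / 2) (hbN : b N = 1 - κ) (hcN : c N = 0)
    (hrec : ∀ n, 1 ≤ n → n < N →
      a n = ν + a (n + 1) - (2 * ν + 2 * a (n + 1) - η * b (n + 1)) ^ 2 /
          (2 * η + 4 * ν + 4 * a (n + 1) - 4 * η * b (n + 1) + 4 * η ^ 2 * c (n + 1)) ∧
      b n = (1 - κ) * b (n + 1) +
          2 * (1 - κ) * (2 * ν + 2 * a (n + 1) - η * b (n + 1)) *
            (1 - b (n + 1) + 2 * η * c (n + 1)) /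
          (2 * η + 4 * ν + 4 * a (n + 1) - 4 * η * b (n + 1) + 4 * η ^ 2 * c (n + 1)) ∧
      c n = (1 - κ) ^ 2 * c (n + 1) -
          (1 - κ) ^ 2 * (1 - b (n + 1) + 2 * η * c (n + 1)) ^ 2 /
          (2 * η + 4 * ν + 4 * a (n + 1) - 4 * η * b (n + 1) + 4 * η ^ 2 * c (n + 1)))
    (u X D : ℕ → ℝ)
    (hX0 : X 0 = X₀) (hD0 : D 0 = d₀)
    (hu : ∀ n, 1 ≤ n → n ≤ N - 1 →
      u n = ((2 * ν + 2 * a (n + 1) - η * b (n + 1)) * X (n - 1) -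
          (1 - b (n + 1) + 2 * η * c (n + 1)) * (1 - κ) * D (n - 1)) /
        (η + 2 * ν + 2 * a (n + 1) - 2 * η * b (n + 1) + 2 * η ^ 2 * c (n + 1)))
    (hXrec : ∀ n, 1 ≤ n → n ≤ N → X n = X (n - 1) - u n)
    (hDrec : ∀ n, 1 ≤ n → n ≤ N → D n = (1 - κ) * D (n - 1) + η * u n)
    (atilde btilde ctilde : ℝ)
    (hat : atilde = κ * (2 * κ * η - κ ^ 2 * η + 2 * ν) /
        (2 * κ * η - κ ^ 2 * η - 2 * κ * ν + 2 * ν))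
    (hbt : btilde = κ ^ 2 * (2 - 3 * κ + κ ^ 2) /
        (2 * κ * η - κ ^ 2 * η - 2 * κ * ν + 2 * ν))
    (hct : ctilde = -2 * κ * ν / (2 * κ * η - κ ^ 2 * η - 2 * κ * ν + 2 * ν))
    (A B C : ℕ → ℝ)
    (hA1 : A 1 = 1) (hB1 : B 1 = 0) (hC1 : C 1 = 0)
    (hA2 : A 2 = atilde) (hB2 : B 2 = btilde) (hC2 : C 2 = ctilde)
    (hAi : ∀ i, 3 ≤ i → i ≤ N - 1 →
      A i = atilde * A (i - 1) +
        ∑ j ∈ Finset.Icc 1 (i - 2), (btilde * η * (1 - κ) ^ (i - 2 - j) - ctilde) * A j)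
    (hBi : ∀ i, 3 ≤ i → i ≤ N - 1 →
      B i = atilde * B (i - 1) + btilde * (1 - κ) ^ (i - 2) +
        ∑ j ∈ Finset.Icc 1 (i - 2), (btilde * η * (1 - κ) ^ (i - 2 - j) - ctilde) * B j)
    (hCi : ∀ i, 3 ≤ i → i ≤ N - 1 →
      C i = atilde * C (i - 1) + ctilde +
        ∑ j ∈ Finset.Icc 1 (i - 2), (btilde * η * (1 - κ) ^ (i - 2 - j) - ctilde) * C j)
    (Ax Bx Cx : ℕ → ℝ)
    (hAx1 : Ax 1 = 0) (hBx1 : Bx 1 = 0) (hCx1 : Cx 1 = 1)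
    (hAx : ∀ i, 1 ≤ i → i ≤ N - 1 → Ax (i + 1) = -∑ j ∈ Finset.Icc 1 i, A j)
    (hBx : ∀ i, 1 ≤ i → i ≤ N - 1 → Bx (i + 1) = -∑ j ∈ Finset.Icc 1 i, B j)
    (hCx : ∀ i, 1 ≤ i → i ≤ N - 1 → Cx (i + 1) = 1 - ∑ j ∈ Finset.Icc 1 i, C j)
    (Ad Bd Cd : ℕ → ℝ)
    (hAd1 : Ad 1 = 0) (hBd1 : Bd 1 = 1) (hCd1 : Cd 1 = 0)
    (hAd : ∀ i, 1 ≤ i → i ≤ N - 1 →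
      Ad (i + 1) = ∑ j ∈ Finset.Icc 1 i, η * (1 - κ) ^ (i - j) * A j)
    (hBd : ∀ i, 1 ≤ i → i ≤ N - 1 →
      Bd (i + 1) = (1 - κ) ^ i + ∑ j ∈ Finset.Icc 1 i, η * (1 - κ) ^ (i - j) * B j)
    (hCd : ∀ i, 1 ≤ i → i ≤ N - 1 →
      Cd (i + 1) = ∑ j ∈ Finset.Icc 1 i, η * (1 - κ) ^ (i - j) * C j)
    :
    ∀ n, n ≤ N - 1 →
      X n = Ax (n + 1) * u 1 + Bx (n + 1) * d₀ + Cx (n + 1) * X₀ ∧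
        D n = Ad (n + 1) * u 1 + Bd (n + 1) * d₀ + Cd (n + 1) * X₀ := by
  have htwo := controls_two_step hη hκ0 hκ1 hν haN hbN hcN hrec hu hXrec hDrec
  rw [coeffDenom, ← hat, ← hbt, ← hct] at htwo
  have hXsum := eq_sub_sum_Icc_of_eq_sub hXrec
  have hDsum := eq_pow_mul_add_sum_Icc_of_eq_mul_add hDrec
  set K : ℕ → ℕ → ℝ := fun i j => btilde * η * (1 - κ) ^ (i - 2 - j) - ctilde
  have hAv : IsVolterraSolution atilde K (fun _ => 0) (N - 1) A :=
    .of_eq_two (by simp [hA1, hA2]) fun i hi hiN => by simpa using hAi i hi hiN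
  have hBv : IsVolterraSolution atilde K (fun i => btilde * (1 - κ) ^ (i - 2)) (N - 1) B :=
    .of_eq_two (by simp [hB1, hB2]) hBi
  have hCv : IsVolterraSolution atilde K (fun _ => ctilde) (N - 1) C :=
    .of_eq_two (by simp [hC1, hC2]) hCi
  have huv : IsVolterraSolution atilde K
      (fun i => btilde * (1 - κ) ^ (i - 2) * D 0 + ctilde * X 0) (N - 1) u :=
    isVolterraSolution_of_two_step (fun n _ => hXsum n (by omega)) (fun n _ => hDsum n (by omega))
      htwo
  have hU := huv.eq_of_eq_one (hAv.linear_comb hBv hCv (u 1) d₀ X₀)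
    (fun i => by rw [hX0, hD0]; ring) (by simp [hA1, hB1, hC1])
  intro n hn
  rcases Nat.eq_zero_or_pos n with rfl | hn1
  · simp [hX0, hD0, hAx1, hBx1, hCx1, hAd1, hBd1, hCd1]
  have hsum := sum_Icc_mul_eq_of_forall_eq hU hn
  constructor
  · have hsum₁ := hsum fun _ => 1
    simp only [one_mul] at hsum₁
    rw [hXsum n (by omega), hX0, hsum₁, hAx n hn1 hn, hBx n hn1 hn, hCx n hn1 hn]
    ring
  · rw [hDsum n (by omega), hD0, hsum, hAd n hn1 hn, hBd n hn1 hn, hCd n hn1 hn]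
    ring

/-- **Affine representation of the optimally controlled states**
(Proposition 3.2). In the deterministic (`σ = 0`) linear problem, the remaining
inventory and the deviation process of the optimal feedback strategy satisfy
`X_n = 𝔞ˣ_{n+1}·u₁ + 𝔟ˣ_{n+1}·d₀ + 𝔠ˣ_{n+1}·X₀` and
`D_n = 𝔞ᵈ_{n+1}·u₁ + 𝔟ᵈ_{n+1}·d₀ + 𝔠ᵈ_{n+1}·X₀` for `n = 0, …, N−1`. -/
theorem deterministic_states_representation
    (N : ℕ) (hN : 2 ≤ N)
    (η κ ν : ℝ) (hη : 0 < η) (hκ0 : 0 < κ) (hκ1 : κ ≤ 1) (hν : 0 ≤ ν)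
    (X₀ d₀ : ℝ) (hX₀ : 0 < X₀)
    (a b c : ℕ → ℝ)
    (haN : a N = η / 2) (hbN : b N = 1 - κ) (hcN : c N = 0)
    (hrec : ∀ n, 1 ≤ n → n < N →
      a n = ν + a (n + 1) - (2 * ν + 2 * a (n + 1) - η * b (n + 1)) ^ 2 /
          (2 * η + 4 * ν + 4 * a (n + 1) - 4 * η * b (n + 1) + 4 * η ^ 2 * c (n + 1)) ∧
      b n = (1 - κ) * b (n + 1) +
          2 * (1 - κ) * (2 * ν + 2 * a (n + 1) - η * b (n + 1)) *
            (1 - b (n + 1) + 2 * η * c (n + 1)) /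
          (2 * η + 4 * ν + 4 * a (n + 1) - 4 * η * b (n + 1) + 4 * η ^ 2 * c (n + 1)) ∧
      c n = (1 - κ) ^ 2 * c (n + 1) -
          (1 - κ) ^ 2 * (1 - b (n + 1) + 2 * η * c (n + 1)) ^ 2 /
          (2 * η + 4 * ν + 4 * a (n + 1) - 4 * η * b (n + 1) + 4 * η ^ 2 * c (n + 1)))
    (u X D : ℕ → ℝ)
    (hX0 : X 0 = X₀) (hD0 : D 0 = d₀)
    (hu : ∀ n, 1 ≤ n → n ≤ N - 1 →
      u n = ((2 * ν + 2 * a (n + 1) - η * b (n + 1)) * X (n - 1) -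
          (1 - b (n + 1) + 2 * η * c (n + 1)) * (1 - κ) * D (n - 1)) /
        (η + 2 * ν + 2 * a (n + 1) - 2 * η * b (n + 1) + 2 * η ^ 2 * c (n + 1)))
    (huN : u N = X (N - 1))
    (hXrec : ∀ n, 1 ≤ n → n ≤ N → X n = X (n - 1) - u n)
    (hDrec : ∀ n, 1 ≤ n → n ≤ N → D n = (1 - κ) * D (n - 1) + η * u n)
    (atilde btilde ctilde : ℝ)
    (hat : atilde = κ * (2 * κ * η - κ ^ 2 * η + 2 * ν) /
        (2 * κ * η - κ ^ 2 * η - 2 * κ * ν + 2 * ν))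
    (hbt : btilde = κ ^ 2 * (2 - 3 * κ + κ ^ 2) /
        (2 * κ * η - κ ^ 2 * η - 2 * κ * ν + 2 * ν))
    (hct : ctilde = -2 * κ * ν / (2 * κ * η - κ ^ 2 * η - 2 * κ * ν + 2 * ν))
    (A B C : ℕ → ℝ)
    (hA1 : A 1 = 1) (hB1 : B 1 = 0) (hC1 : C 1 = 0)
    (hA2 : A 2 = atilde) (hB2 : B 2 = btilde) (hC2 : C 2 = ctilde)
    (hAi : ∀ i, 3 ≤ i → i ≤ N - 1 →
      A i = atilde * A (i - 1) +
        ∑ j ∈ Finset.Icc 1 (i - 2), (btilde * η * (1 - κ) ^ (i - 2 - j) - ctilde) * A j)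
    (hBi : ∀ i, 3 ≤ i → i ≤ N - 1 →
      B i = atilde * B (i - 1) + btilde * (1 - κ) ^ (i - 2) +
        ∑ j ∈ Finset.Icc 1 (i - 2), (btilde * η * (1 - κ) ^ (i - 2 - j) - ctilde) * B j)
    (hCi : ∀ i, 3 ≤ i → i ≤ N - 1 →
      C i = atilde * C (i - 1) + ctilde +
        ∑ j ∈ Finset.Icc 1 (i - 2), (btilde * η * (1 - κ) ^ (i - 2 - j) - ctilde) * C j)
    (hAN : A N = -∑ j ∈ Finset.Icc 1 (N - 1), A j)
    (hBN : B N = -∑ j ∈ Finset.Icc 1 (N - 1), B j)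
    (hCN : C N = 1 - ∑ j ∈ Finset.Icc 1 (N - 1), C j)
    (Ax Bx Cx : ℕ → ℝ)
    (hAx1 : Ax 1 = 0) (hBx1 : Bx 1 = 0) (hCx1 : Cx 1 = 1)
    (hAx : ∀ i, 1 ≤ i → i ≤ N - 1 → Ax (i + 1) = -∑ j ∈ Finset.Icc 1 i, A j)
    (hBx : ∀ i, 1 ≤ i → i ≤ N - 1 → Bx (i + 1) = -∑ j ∈ Finset.Icc 1 i, B j)
    (hCx : ∀ i, 1 ≤ i → i ≤ N - 1 → Cx (i + 1) = 1 - ∑ j ∈ Finset.Icc 1 i, C j)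
    (Ad Bd Cd : ℕ → ℝ)
    (hAd1 : Ad 1 = 0) (hBd1 : Bd 1 = 1) (hCd1 : Cd 1 = 0)
    (hAd : ∀ i, 1 ≤ i → i ≤ N - 1 →
      Ad (i + 1) = ∑ j ∈ Finset.Icc 1 i, η * (1 - κ) ^ (i - j) * A j)
    (hBd : ∀ i, 1 ≤ i → i ≤ N - 1 →
      Bd (i + 1) = (1 - κ) ^ i + ∑ j ∈ Finset.Icc 1 i, η * (1 - κ) ^ (i - j) * B j)
    (hCd : ∀ i, 1 ≤ i → i ≤ N - 1 →
      Cd (i + 1) = ∑ j ∈ Finset.Icc 1 i, η * (1 - κ) ^ (i - j) * C j)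
    :
    ∀ n, n ≤ N - 1 →
      X n = Ax (n + 1) * u 1 + Bx (n + 1) * d₀ + Cx (n + 1) * X₀ ∧
        D n = Ad (n + 1) * u 1 + Bd (n + 1) * d₀ + Cd (n + 1) * X₀ :=
  deterministic_states_representation_general N η κ ν hη hκ0 hκ1 hν X₀ d₀ a b c haN hbN hcN hrec u X
    D hX0 hD0 hu hXrec hDrec atilde btilde ctilde hat hbt hct A B C hA1 hB1 hC1 hA2 hB2 hC2 hAi hBi
    hCi Ax Bx Cx hAx1 hBx1 hCx1 hAx hBx hCx Ad Bd Cd hAd1 hBd1 hCd1 hAd hBd hCd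
end

section
/- Fix N ≥ 3, η > 0, κ ∈ (0,1], set ν = 0, take α = 1, σ = 0, X₀ > 0 and initial deviation d₀ = 0. Let (u°_n)_{n=1,...,N} be the deterministic feedback sequence of the linear problem. Then the optimal strategy is the symmetric U-shape: u°₁ = u°_N = X₀/(2 + (N−2)κ) and u°_n = κ·u°₁ for all n = 2,...,N−1. In particular, for full resilience κ = 1 all trades equal X₀/N. -/
/-!
With `m` periods still to go and `p = 2 - κ + κm`, the Riccati coefficients are
`a = η(2-κ)/(2p)`, `b = (1-κ)(2-κ)/p`, `c = -κ(1-κ)²m/(2ηp)`, as a backward induction from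
`m = 0` checks. Substituted into the feedback rule they give
`u_n = (η X_{n-1} - (1+κm)(1-κ) D_{n-1}) / (η(κm+2))` with `m = N - n - 1`. Starting from
`D₀ = 0`, the first trade `u₁` moves the deviation to `η u₁`; from then on each trade `κ u₁` is
exactly the amount the deviation recovers, so `D` stays at `η u₁`, the position falls linearly, and
the last trade `X_{N-1}` equals `u₁` again.
-/

noncomputable section

namespace ObizhaevaWang

variable {η κ m : ℝ}

/-- Closed forms of `a_n`, `b_n`, `c_n` as functions of `m = N - n`. -/
def coeffA (η κ m : ℝ) : ℝ := η * (2 - κ) / (2 * (2 - κ + κ * m))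

def coeffB (κ m : ℝ) : ℝ := (1 - κ) * (2 - κ) / (2 - κ + κ * m)

def coeffC (η κ m : ℝ) : ℝ := -(κ * (1 - κ) ^ 2 * m) / (2 * η * (2 - κ + κ * m))

lemma two_sub_add_mul_pos (hκ0 : 0 ≤ κ) (hκ2 : κ < 2) (hm : 0 ≤ m) : 0 < 2 - κ + κ * m := by
  nlinarith [mul_nonneg hκ0 hm]

lemma feedback_denom_eq (hη : η ≠ 0) (hp : 2 - κ + κ * m ≠ 0) :
    η + 2 * coeffA η κ m - 2 * η * coeffB κ m + 2 * η ^ 2 * coeffC η κ m =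
      η * κ * (2 - κ) * (κ * m + 2) / (2 - κ + κ * m) := by
  unfold coeffA coeffB coeffC
  field_simp
  ring

lemma coeff_succ (hη : η ≠ 0) (hκ0 : 0 < κ) (hκ2 : κ < 2) (hm : 0 ≤ m) :
    let Q := 2 * η + 4 * coeffA η κ m - 4 * η * coeffB κ m + 4 * η ^ 2 * coeffC η κ m
    coeffA η κ m - (2 * coeffA η κ m - η * coeffB κ m) ^ 2 / Q = coeffA η κ (m + 1) ∧
    (1 - κ) * coeffB κ m + 2 * (1 - κ) * (2 * coeffA η κ m - η * coeffB κ m) *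
        (1 - coeffB κ m + 2 * η * coeffC η κ m) / Q = coeffB κ (m + 1) ∧
    (1 - κ) ^ 2 * coeffC η κ m - (1 - κ) ^ 2 * (1 - coeffB κ m + 2 * η * coeffC η κ m) ^ 2 / Q =
      coeffC η κ (m + 1) := by
  have hp := two_sub_add_mul_pos hκ0.le hκ2 hm
  have hp' := two_sub_add_mul_pos hκ0.le hκ2 (by linarith : 0 ≤ m + 1)
  have hq : κ * m + 2 ≠ 0 := by nlinarith
  have hκ : 2 - κ ≠ 0 := by linarith
  intro Q
  have hQ : Q = 2 * (η * κ * (2 - κ) * (κ * m + 2) / (2 - κ + κ * m)) := by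
    rw [← feedback_denom_eq hη hp.ne']
    ring
  rw [hQ]
  unfold coeffA coeffB coeffC
  refine ⟨?_, ?_, ?_⟩ <;> field_simp <;> ring

lemma feedback_eq (hη : η ≠ 0) (hκ0 : 0 < κ) (hκ2 : κ < 2) (hm : 0 ≤ m) (x d : ℝ) :
    ((2 * coeffA η κ m - η * coeffB κ m) * x -
          (1 - coeffB κ m + 2 * η * coeffC η κ m) * (1 - κ) * d) /
        (η + 2 * coeffA η κ m - 2 * η * coeffB κ m + 2 * η ^ 2 * coeffC η κ m) =
      (η * x - (1 + κ * m) * (1 - κ) * d) / (η * (κ * m + 2)) := by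
  have hp := two_sub_add_mul_pos hκ0.le hκ2 hm
  have hq : κ * m + 2 ≠ 0 := by nlinarith
  have hκ : 2 - κ ≠ 0 := by linarith
  rw [feedback_denom_eq hη hp.ne']
  unfold coeffA coeffB coeffC
  field_simp
  ring

theorem coeff_eq_closed_form {N : ℕ} {a b c : ℕ → ℝ} (hη : η ≠ 0) (hκ0 : 0 < κ) (hκ2 : κ < 2)
    (haN : a N = η / 2) (hbN : b N = 1 - κ) (hcN : c N = 0)
    (hrec : ∀ n, 1 ≤ n → n < N →
      a n = a (n + 1) - (2 * a (n + 1) - η * b (n + 1)) ^ 2 /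
          (2 * η + 4 * a (n + 1) - 4 * η * b (n + 1) + 4 * η ^ 2 * c (n + 1)) ∧
      b n = (1 - κ) * b (n + 1) +
          2 * (1 - κ) * (2 * a (n + 1) - η * b (n + 1)) * (1 - b (n + 1) + 2 * η * c (n + 1)) /
          (2 * η + 4 * a (n + 1) - 4 * η * b (n + 1) + 4 * η ^ 2 * c (n + 1)) ∧
      c n = (1 - κ) ^ 2 * c (n + 1) -
          (1 - κ) ^ 2 * (1 - b (n + 1) + 2 * η * c (n + 1)) ^ 2 /
          (2 * η + 4 * a (n + 1) - 4 * η * b (n + 1) + 4 * η ^ 2 * c (n + 1)))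
    {n : ℕ} (hn1 : 1 ≤ n) (hnN : n ≤ N) :
    a n = coeffA η κ (N - n) ∧ b n = coeffB κ (N - n) ∧ c n = coeffC η κ (N - n) := by
  induction hnN using Nat.decreasingInduction with
  | self =>
    have : 2 - κ ≠ 0 := by linarith
    simp [coeffA, coeffB, coeffC, haN, hbN, hcN, mul_div_mul_right _ _ this,
      mul_div_cancel_right₀ _ this]
  | of_succ k hkN ih =>
    obtain ⟨ha, hb, hc⟩ := ih (by omega)
    have hm : (0 : ℝ) ≤ N - (k + 1 : ℕ) := sub_nonneg.2 (by exact_mod_cast hkN)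
    have hk : (N : ℝ) - k = N - (k + 1 : ℕ) + 1 := by push_cast; ring
    obtain ⟨hA, hB, hC⟩ := hrec k hn1 hkN
    rw [hA, hB, hC, ha, hb, hc, hk]
    exact coeff_succ hη hκ0 hκ2 hm

theorem trade_eq_of_coeff_eq {N : ℕ} {a b c u X D : ℕ → ℝ} (hη : η ≠ 0) (hκ0 : 0 < κ)
    (hκ2 : κ < 2)
    (hcoeff : ∀ n, 1 ≤ n → n ≤ N →
      a n = coeffA η κ (N - n) ∧ b n = coeffB κ (N - n) ∧ c n = coeffC η κ (N - n))
    (hu : ∀ n, 1 ≤ n → n < N →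
      u n = ((2 * a (n + 1) - η * b (n + 1)) * X (n - 1) -
          (1 - b (n + 1) + 2 * η * c (n + 1)) * (1 - κ) * D (n - 1)) /
        (η + 2 * a (n + 1) - 2 * η * b (n + 1) + 2 * η ^ 2 * c (n + 1)))
    {n : ℕ} (hn1 : 1 ≤ n) (hnN : n < N) :
    u n = (η * X (n - 1) - (1 + κ * (N - (n + 1 : ℕ))) * (1 - κ) * D (n - 1)) /
      (η * (κ * (N - (n + 1 : ℕ)) + 2)) := by
  obtain ⟨ha, hb, hc⟩ := hcoeff (n + 1) (by omega) hnN
  have hm : (0 : ℝ) ≤ N - (n + 1 : ℕ) := sub_nonneg.2 (by exact_mod_cast hnN)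
  rw [hu n hn1 hnN, ha, hb, hc, feedback_eq hη hκ0 hκ2 hm]

theorem position_deviation_eq {N : ℕ} {u X D : ℕ → ℝ} {u₁ : ℝ} (hη : η ≠ 0) (hκ0 : 0 < κ)
    (hX0 : X 0 = u₁ * (2 + (N - 2) * κ)) (hD0 : D 0 = 0)
    (hu : ∀ n, 1 ≤ n → n < N →
      u n = (η * X (n - 1) - (1 + κ * (N - (n + 1 : ℕ))) * (1 - κ) * D (n - 1)) /
        (η * (κ * (N - (n + 1 : ℕ)) + 2)))
    (hXrec : ∀ n, 1 ≤ n → n ≤ N → X n = X (n - 1) - u n)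
    (hDrec : ∀ n, 1 ≤ n → n ≤ N → D n = (1 - κ) * D (n - 1) + η * u n)
    {n : ℕ} (hn1 : 1 ≤ n) (hnN : n < N) :
    u n = (if n = 1 then u₁ else κ * u₁) ∧ X n = u₁ * (1 + κ * (N - 1 - n)) ∧ D n = η * u₁ := by
  have hden : ∀ k : ℕ, k < N → κ * (N - (k + 1 : ℕ)) + 2 ≠ 0 := fun k hk => by
    have : (0 : ℝ) ≤ N - (k + 1 : ℕ) := sub_nonneg.2 (by exact_mod_cast hk)
    positivity
  induction n, hn1 using Nat.le_induction with
  | base =>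
    have hu1 : u 1 = u₁ := by
      rw [hu 1 le_rfl hnN, Nat.sub_self, hX0, hD0, div_eq_iff (mul_ne_zero hη (hden 1 hnN))]
      push_cast
      ring
    refine ⟨by simpa using hu1, ?_, ?_⟩
    · rw [hXrec 1 le_rfl hnN.le, Nat.sub_self, hX0, hu1]
      push_cast
      ring
    · rw [hDrec 1 le_rfl hnN.le, Nat.sub_self, hD0, hu1]
      ring
  | succ k hk ih =>
    obtain ⟨-, hX, hD⟩ := ih (by omega)
    have huk : u (k + 1) = κ * u₁ := by
      rw [hu (k + 1) (by omega) hnN, Nat.add_sub_cancel, hX, hD,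
        div_eq_iff (mul_ne_zero hη (hden (k + 1) hnN))]
      push_cast
      ring
    refine ⟨by rw [if_neg (by omega), huk], ?_, ?_⟩
    · rw [hXrec (k + 1) (by omega) hnN.le, Nat.add_sub_cancel, hX, huk]
      push_cast
      ring
    · rw [hDrec (k + 1) (by omega) hnN.le, Nat.add_sub_cancel, hD, huk]
      ring

end ObizhaevaWang

end

theorem u_shape_obizhaeva_wang_general
    (N : ℕ) (hN : 3 ≤ N)
    (η κ ν : ℝ) (hη : 0 < η) (hκ0 : 0 < κ) (hκ1 : κ ≤ 1) (hν0 : ν = 0)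
    (X₀ d₀ : ℝ) (hd₀ : d₀ = 0)
    (a b c : ℕ → ℝ)
    (haN : a N = η / 2) (hbN : b N = 1 - κ) (hcN : c N = 0)
    (hrec : ∀ n, 1 ≤ n → n < N →
      a n = ν + a (n + 1) - (2 * ν + 2 * a (n + 1) - η * b (n + 1)) ^ 2 /
          (2 * η + 4 * ν + 4 * a (n + 1) - 4 * η * b (n + 1) + 4 * η ^ 2 * c (n + 1)) ∧
      b n = (1 - κ) * b (n + 1) +
          2 * (1 - κ) * (2 * ν + 2 * a (n + 1) - η * b (n + 1)) *
            (1 - b (n + 1) + 2 * η * c (n + 1)) /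
          (2 * η + 4 * ν + 4 * a (n + 1) - 4 * η * b (n + 1) + 4 * η ^ 2 * c (n + 1)) ∧
      c n = (1 - κ) ^ 2 * c (n + 1) -
          (1 - κ) ^ 2 * (1 - b (n + 1) + 2 * η * c (n + 1)) ^ 2 /
          (2 * η + 4 * ν + 4 * a (n + 1) - 4 * η * b (n + 1) + 4 * η ^ 2 * c (n + 1)))
    (u X D : ℕ → ℝ)
    (hX0 : X 0 = X₀) (hD0 : D 0 = d₀)
    (hu : ∀ n, 1 ≤ n → n ≤ N - 1 →
      u n = ((2 * ν + 2 * a (n + 1) - η * b (n + 1)) * X (n - 1) -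
          (1 - b (n + 1) + 2 * η * c (n + 1)) * (1 - κ) * D (n - 1)) /
        (η + 2 * ν + 2 * a (n + 1) - 2 * η * b (n + 1) + 2 * η ^ 2 * c (n + 1)))
    (huN : u N = X (N - 1))
    (hXrec : ∀ n, 1 ≤ n → n ≤ N → X n = X (n - 1) - u n)
    (hDrec : ∀ n, 1 ≤ n → n ≤ N → D n = (1 - κ) * D (n - 1) + η * u n)
    :
    u 1 = X₀ / (2 + ((N : ℝ) - 2) * κ) ∧
      u N = u 1 ∧
      (∀ n, 2 ≤ n → n ≤ N - 1 → u n = κ * u 1) ∧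
      (κ = 1 → ∀ n, 1 ≤ n → n ≤ N → u n = X₀ / N) := by
  subst hν0 hd₀
  have hκ2 : κ < 2 := by linarith
  have hN2 : (2 : ℝ) ≤ N := by exact_mod_cast (by omega : 2 ≤ N)
  have hcoeff := fun n =>
    ObizhaevaWang.coeff_eq_closed_form (n := n) hη.ne' hκ0 hκ2 haN hbN hcN
    fun n h1 h2 => by simpa only [mul_zero, zero_add, add_zero] using hrec n h1 h2
  have hfeedback := fun n =>
    ObizhaevaWang.trade_eq_of_coeff_eq (n := n) hη.ne' hκ0 hκ2 hcoeff
    fun n h1 h2 => by simpa only [mul_zero, zero_add, add_zero] using hu n h1 (by omega)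
  set u₁ := X₀ / (2 + ((N : ℝ) - 2) * κ) with hu₁_def
  have hX0' : X 0 = u₁ * (2 + (N - 2) * κ) := by
    rw [hX0, div_mul_cancel₀]
    nlinarith
  have htraj := fun n =>
    ObizhaevaWang.position_deviation_eq (n := n) hη.ne' hκ0 hX0' hD0 hfeedback hXrec hDrec
  have hu1 : u 1 = u₁ := by simpa using (htraj 1 le_rfl (by omega)).1
  have huN' : u N = u₁ := by
    rw [huN, (htraj (N - 1) (by omega) (by omega)).2.1, Nat.cast_sub (by omega)]
    ring
  have hmid : ∀ n, 2 ≤ n → n ≤ N - 1 → u n = κ * u₁ := fun n h2 hn => by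
    simpa [show n ≠ 1 by omega] using (htraj n (by omega) (by omega)).1
  refine ⟨hu1, huN'.trans hu1.symm, fun n h2 hn => hu1 ▸ hmid n h2 hn, ?_⟩
  rintro rfl n h1 hn
  have hu₁ : u₁ = X₀ / N := by rw [hu₁_def, mul_one, add_sub_cancel]
  rcases (by omega : n = 1 ∨ n = N ∨ (2 ≤ n ∧ n ≤ N - 1)) with rfl | rfl | ⟨h2, hn'⟩
  · rw [hu1, hu₁]
  · rw [huN', hu₁]
  · rw [hmid n h2 hn', one_mul, hu₁]

/-- **The symmetric U-shaped Obizhaeva–Wang strategy** (Corollary 3.3, `d₀ = 0`).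
In the deterministic (`σ = 0`) linear problem with `ν = 0` and zero initial
deviation, the optimal trades are `u₁ = u_N = X₀/(2 + (N−2)κ)` and
`u_n = κ·u₁` for `n = 2, …, N−1`; for full resilience `κ = 1` all trades
equal `X₀/N`. -/
theorem u_shape_obizhaeva_wang
    (N : ℕ) (hN : 3 ≤ N)
    (η κ ν : ℝ) (hη : 0 < η) (hκ0 : 0 < κ) (hκ1 : κ ≤ 1) (hν0 : ν = 0)
    (X₀ d₀ : ℝ) (hX₀ : 0 < X₀) (hd₀ : d₀ = 0)
    (a b c : ℕ → ℝ)
    (haN : a N = η / 2) (hbN : b N = 1 - κ) (hcN : c N = 0)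
    (hrec : ∀ n, 1 ≤ n → n < N →
      a n = ν + a (n + 1) - (2 * ν + 2 * a (n + 1) - η * b (n + 1)) ^ 2 /
          (2 * η + 4 * ν + 4 * a (n + 1) - 4 * η * b (n + 1) + 4 * η ^ 2 * c (n + 1)) ∧
      b n = (1 - κ) * b (n + 1) +
          2 * (1 - κ) * (2 * ν + 2 * a (n + 1) - η * b (n + 1)) *
            (1 - b (n + 1) + 2 * η * c (n + 1)) /
          (2 * η + 4 * ν + 4 * a (n + 1) - 4 * η * b (n + 1) + 4 * η ^ 2 * c (n + 1)) ∧
      c n = (1 - κ) ^ 2 * c (n + 1) -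
          (1 - κ) ^ 2 * (1 - b (n + 1) + 2 * η * c (n + 1)) ^ 2 /
          (2 * η + 4 * ν + 4 * a (n + 1) - 4 * η * b (n + 1) + 4 * η ^ 2 * c (n + 1)))
    (u X D : ℕ → ℝ)
    (hX0 : X 0 = X₀) (hD0 : D 0 = d₀)
    (hu : ∀ n, 1 ≤ n → n ≤ N - 1 →
      u n = ((2 * ν + 2 * a (n + 1) - η * b (n + 1)) * X (n - 1) -
          (1 - b (n + 1) + 2 * η * c (n + 1)) * (1 - κ) * D (n - 1)) /
        (η + 2 * ν + 2 * a (n + 1) - 2 * η * b (n + 1) + 2 * η ^ 2 * c (n + 1)))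
    (huN : u N = X (N - 1))
    (hXrec : ∀ n, 1 ≤ n → n ≤ N → X n = X (n - 1) - u n)
    (hDrec : ∀ n, 1 ≤ n → n ≤ N → D n = (1 - κ) * D (n - 1) + η * u n)
    :
    u 1 = X₀ / (2 + ((N : ℝ) - 2) * κ) ∧
      u N = u 1 ∧
      (∀ n, 2 ≤ n → n ≤ N - 1 → u n = κ * u 1) ∧
      (κ = 1 → ∀ n, 1 ≤ n → n ≤ N → u n = X₀ / N) :=
  u_shape_obizhaeva_wang_general N hN η κ ν hη hκ0 hκ1 hν0 X₀ d₀ hd₀ a b c haN hbN hcN hrec u X D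
    hX0 hD0 hu huN hXrec hDrec
end

section
/- Fix N ≥ 2, η > 0, κ ∈ (0,1], ν ≥ 0. Then for every n = 2,...,N, the quantity Q_n := 2η + 4ν + 4a_n − 4ηb_n + 4η²c_n is strictly positive, where (a_n, b_n, c_n) are defined by the backward recursion. -/
/-!
With `A = slack = 2ν + 2a − ηb` and `B = gap = 1 − b + 2ηc` one has `Q = 2A + 2ηB`. Backwards from
the terminal values, the recursion preserves `A ≥ 0`, `B ≥ κ`, `b ≥ 0` and `c ≤ 0`, which forces
`Q > 0`. Preservation comes from the identities
`A_n = 2ν + ηκ b_{n+1} + 2κη A_{n+1} B_{n+1} / Q_{n+1}` and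
`B_n = κ − 2ηκ(1 − κ) c_{n+1} + 2κη(1 − κ) B_{n+1}² / Q_{n+1}`,
in which every term on the right is visibly nonnegative.
-/

namespace BackwardRecursion

def slack (η ν a b : ℝ) : ℝ := 2 * ν + 2 * a - η * b

def gap (η b c : ℝ) : ℝ := 1 - b + 2 * η * c

def denom (η ν a b c : ℝ) : ℝ := 2 * η + 4 * ν + 4 * a - 4 * η * b + 4 * η ^ 2 * c

variable {η κ ν a b c a' b' c' : ℝ}

lemma denom_eq_slack_add_gap :
    denom η ν a b c = 2 * slack η ν a b + 2 * η * gap η b c := by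
  unfold denom slack gap
  ring

lemma slack_step (hQ : denom η ν a' b' c' ≠ 0)
    (ha : a = ν + a' - slack η ν a' b' ^ 2 / denom η ν a' b' c')
    (hb : b = (1 - κ) * b' +
      2 * (1 - κ) * slack η ν a' b' * gap η b' c' / denom η ν a' b' c') :
    slack η ν a b = 2 * ν + η * κ * b' +
      2 * κ * η * slack η ν a' b' * gap η b' c' / denom η ν a' b' c' := by
  have hQA : denom η ν a' b' c' = 2 * slack η ν a' b' + 2 * η * gap η b' c' :=
    denom_eq_slack_add_gap
  have hA : slack η ν a' b' = 2 * ν + 2 * a' - η * b' := rfl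
  generalize slack η ν a' b' = A at *
  generalize denom η ν a' b' c' = Q at *
  unfold slack
  subst ha hb
  field_simp
  linear_combination -Q * hA + A * hQA

lemma gap_step (hQ : denom η ν a' b' c' ≠ 0)
    (hb : b = (1 - κ) * b' +
      2 * (1 - κ) * slack η ν a' b' * gap η b' c' / denom η ν a' b' c')
    (hc : c = (1 - κ) ^ 2 * c' - (1 - κ) ^ 2 * gap η b' c' ^ 2 / denom η ν a' b' c') :
    gap η b c = κ - 2 * η * κ * (1 - κ) * c' +
      2 * κ * η * (1 - κ) * gap η b' c' ^ 2 / denom η ν a' b' c' := by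
  have hQB : denom η ν a' b' c' = 2 * slack η ν a' b' + 2 * η * gap η b' c' :=
    denom_eq_slack_add_gap
  have hB : gap η b' c' = 1 - b' + 2 * η * c' := rfl
  generalize gap η b' c' = B at *
  generalize denom η ν a' b' c' = Q at *
  unfold gap
  subst hb hc
  field_simp
  linear_combination (κ - 1) * Q * hB + (1 - κ) * B * hQB

variable (η κ ν a b c) in
structure Invariant : Prop where
  slack_nonneg : 0 ≤ slack η ν a b
  le_gap : κ ≤ gap η b c
  b_nonneg : 0 ≤ b
  c_nonpos : c ≤ 0

lemma invariant_terminal (hη : 0 ≤ η) (hκ0 : 0 ≤ κ) (hκ1 : κ ≤ 1) (hν : 0 ≤ ν) :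
    Invariant η κ ν (η / 2) (1 - κ) 0 where
  slack_nonneg := by unfold slack; nlinarith
  le_gap := by unfold gap; linarith
  b_nonneg := by linarith
  c_nonpos := le_rfl

namespace Invariant

lemma denom_pos (h : Invariant η κ ν a b c) (hη : 0 < η) (hκ : 0 < κ) :
    0 < denom η ν a b c := by
  rw [denom_eq_slack_add_gap]
  have := h.slack_nonneg
  have := h.le_gap
  nlinarith

lemma step (h : Invariant η κ ν a' b' c') (hη : 0 < η) (hκ0 : 0 < κ) (hκ1 : κ ≤ 1)
    (hν : 0 ≤ ν)
    (ha : a = ν + a' - slack η ν a' b' ^ 2 / denom η ν a' b' c')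
    (hb : b = (1 - κ) * b' +
      2 * (1 - κ) * slack η ν a' b' * gap η b' c' / denom η ν a' b' c')
    (hc : c = (1 - κ) ^ 2 * c' - (1 - κ) ^ 2 * gap η b' c' ^ 2 / denom η ν a' b' c') :
    Invariant η κ ν a b c := by
  have hQ := h.denom_pos hη hκ0
  have hA := h.slack_nonneg
  have hB : 0 ≤ gap η b' c' := hκ0.le.trans h.le_gap
  have hb' := h.b_nonneg
  have hc' := h.c_nonpos
  have h1κ : 0 ≤ 1 - κ := sub_nonneg.mpr hκ1
  refine ⟨?_, ?_, ?_, ?_⟩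
  · rw [slack_step hQ.ne' ha hb]
    positivity
  · rw [gap_step hQ.ne' hb hc]
    have : 0 ≤ -(2 * η * κ * (1 - κ) * c') := by
      rw [neg_nonneg]
      exact mul_nonpos_of_nonneg_of_nonpos (by positivity) hc'
    have : 0 ≤ 2 * κ * η * (1 - κ) * gap η b' c' ^ 2 / denom η ν a' b' c' := by positivity
    linarith
  · rw [hb]
    positivity
  · rw [hc]
    have : (1 - κ) ^ 2 * c' ≤ 0 := mul_nonpos_of_nonneg_of_nonpos (by positivity) hc'
    have : 0 ≤ (1 - κ) ^ 2 * gap η b' c' ^ 2 / denom η ν a' b' c' := by positivity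
    linarith

end Invariant

end BackwardRecursion

open BackwardRecursion in
theorem denominator_pos_general
    (N : ℕ)
    (η κ ν : ℝ) (hη : 0 < η) (hκ0 : 0 < κ) (hκ1 : κ ≤ 1) (hν : 0 ≤ ν)
    (a b c : ℕ → ℝ)
    (haN : a N = η / 2) (hbN : b N = 1 - κ) (hcN : c N = 0)
    (hrec : ∀ n, 1 ≤ n → n < N →
      a n = ν + a (n + 1) - (2 * ν + 2 * a (n + 1) - η * b (n + 1)) ^ 2 /
          (2 * η + 4 * ν + 4 * a (n + 1) - 4 * η * b (n + 1) + 4 * η ^ 2 * c (n + 1)) ∧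
      b n = (1 - κ) * b (n + 1) +
          2 * (1 - κ) * (2 * ν + 2 * a (n + 1) - η * b (n + 1)) *
            (1 - b (n + 1) + 2 * η * c (n + 1)) /
          (2 * η + 4 * ν + 4 * a (n + 1) - 4 * η * b (n + 1) + 4 * η ^ 2 * c (n + 1)) ∧
      c n = (1 - κ) ^ 2 * c (n + 1) -
          (1 - κ) ^ 2 * (1 - b (n + 1) + 2 * η * c (n + 1)) ^ 2 /
          (2 * η + 4 * ν + 4 * a (n + 1) - 4 * η * b (n + 1) + 4 * η ^ 2 * c (n + 1))) :
    ∀ n, 2 ≤ n → n ≤ N →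
      0 < 2 * η + 4 * ν + 4 * a n - 4 * η * b n + 4 * η ^ 2 * c n := by
  have hinv : ∀ k, 1 ≤ k → k ≤ N → Invariant η κ ν (a k) (b k) (c k) := by
    intro k hk hkN
    refine Nat.decreasingInduction (motive := fun m _ => 1 ≤ m → Invariant η κ ν (a m) (b m) (c m))
      (fun m hmN ih hm => ?_) (fun _ => ?_) hkN hk
    · obtain ⟨ha, hb, hc⟩ := hrec m hm hmN
      exact (ih (by omega)).step hη hκ0 hκ1 hν ha hb hc
    · rw [haN, hbN, hcN]
      exact invariant_terminal hη.le hκ0.le hκ1 hν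
  intro n hn hnN
  exact (hinv n (by omega) hnN).denom_pos hη hκ0

/-- **Positivity of the denominators in the backward recursion** (Lemma 6.1).
For the coefficients `(a n, b n, c n)` of the linear-quadratic value function,
defined backwards from `a N = η/2`, `b N = 1 − κ`, `c N = 0`, the quantity
`Q n = 2η + 4ν + 4 a n − 4η b n + 4η² c n` is strictly positive for all `n = 2, …, N`. -/
theorem denominator_pos
    (N : ℕ) (hN : 2 ≤ N)
    (η κ ν : ℝ) (hη : 0 < η) (hκ0 : 0 < κ) (hκ1 : κ ≤ 1) (hν : 0 ≤ ν)
    (a b c : ℕ → ℝ)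
    (haN : a N = η / 2) (hbN : b N = 1 - κ) (hcN : c N = 0)
    (hrec : ∀ n, 1 ≤ n → n < N →
      a n = ν + a (n + 1) - (2 * ν + 2 * a (n + 1) - η * b (n + 1)) ^ 2 /
          (2 * η + 4 * ν + 4 * a (n + 1) - 4 * η * b (n + 1) + 4 * η ^ 2 * c (n + 1)) ∧
      b n = (1 - κ) * b (n + 1) +
          2 * (1 - κ) * (2 * ν + 2 * a (n + 1) - η * b (n + 1)) *
            (1 - b (n + 1) + 2 * η * c (n + 1)) /
          (2 * η + 4 * ν + 4 * a (n + 1) - 4 * η * b (n + 1) + 4 * η ^ 2 * c (n + 1)) ∧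
      c n = (1 - κ) ^ 2 * c (n + 1) -
          (1 - κ) ^ 2 * (1 - b (n + 1) + 2 * η * c (n + 1)) ^ 2 /
          (2 * η + 4 * ν + 4 * a (n + 1) - 4 * η * b (n + 1) + 4 * η ^ 2 * c (n + 1))) :
    ∀ n, 2 ≤ n → n ≤ N →
      0 < 2 * η + 4 * ν + 4 * a n - 4 * η * b n + 4 * η ^ 2 * c n :=
  denominator_pos_general N η κ ν hη hκ0 hκ1 hν a b c haN hbN hcN hrec
end

section
/- Fix η > 0, κ ∈ (0,1], ν ≥ 0, σ ≥ 0, and let a', b', c' ∈ ℝ satisfy Q' := 2η + 4ν + 4a' − 4ηb' + 4η²c' > 0. For x, d ∈ ℝ define f : ℝ → ℝ by f(u) = (1−κ)d·u + (η/2)u² + ν(x−u)² + a'(x−u)² + b'(x−u)((1−κ)d + ηu) + c'((1−κ)d + ηu)² + c'σ². Then f has a unique global minimizer u* = [(2ν + 2a' − ηb')x − (1 − b' + 2ηc')(1−κ)d]/(η + 2ν + 2a' − 2ηb' + 2η²c'), and the minimum value is f(u*) = a·x² + b·xd + c·d² + c'σ², where a = ν + a' − (2ν + 2a' − ηb')²/Q',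 b = (1−κ)b' + 2(1−κ)(2ν + 2a' − ηb')(1 − b' + 2ηc')/Q', and c = (1−κ)²c' − (1−κ)²(1 − b' + 2ηc')²/Q'. -/
theorem quadratic_eq_vertex_form {A : ℝ} (hA : A ≠ 0) (B C u : ℝ) :
    A * u ^ 2 + B * u + C = (C - B ^ 2 / (4 * A)) + A * (u - -B / (2 * A)) ^ 2 := by
  field_simp
  ring

theorem quadratic_vertex_lt {A : ℝ} (hA : 0 < A) (B C : ℝ) {u : ℝ} (hu : u ≠ -B / (2 * A)) :
    C - B ^ 2 / (4 * A) < A * u ^ 2 + B * u + C := by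
  rw [quadratic_eq_vertex_form hA.ne' B C u]
  have : 0 < A * (u - -B / (2 * A)) ^ 2 := mul_pos hA (sq_pos_of_ne_zero (sub_ne_zero.2 hu))
  linarith

theorem one_step_dp_minimization_general
    (η κ ν σ : ℝ)
    (a' b' c' : ℝ)
    (hQ' : 0 < 2 * η + 4 * ν + 4 * a' - 4 * η * b' + 4 * η ^ 2 * c')
    (x d : ℝ) (f : ℝ → ℝ)
    (hf : ∀ u, f u = (1 - κ) * d * u + η / 2 * u ^ 2 + ν * (x - u) ^ 2 +
        a' * (x - u) ^ 2 + b' * (x - u) * ((1 - κ) * d + η * u) +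
        c' * ((1 - κ) * d + η * u) ^ 2 + c' * σ ^ 2)
    (ustar : ℝ)
    (hustar : ustar = ((2 * ν + 2 * a' - η * b') * x -
        (1 - b' + 2 * η * c') * (1 - κ) * d) /
        (η + 2 * ν + 2 * a' - 2 * η * b' + 2 * η ^ 2 * c'))
    (a b c : ℝ)
    (ha : a = ν + a' - (2 * ν + 2 * a' - η * b') ^ 2 /
        (2 * η + 4 * ν + 4 * a' - 4 * η * b' + 4 * η ^ 2 * c'))
    (hb : b = (1 - κ) * b' +
        2 * (1 - κ) * (2 * ν + 2 * a' - η * b') * (1 - b' + 2 * η * c') /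
        (2 * η + 4 * ν + 4 * a' - 4 * η * b' + 4 * η ^ 2 * c'))
    (hc : c = (1 - κ) ^ 2 * c' - (1 - κ) ^ 2 * (1 - b' + 2 * η * c') ^ 2 /
        (2 * η + 4 * ν + 4 * a' - 4 * η * b' + 4 * η ^ 2 * c')) :
    (∀ u : ℝ, u ≠ ustar → f ustar < f u) ∧
      f ustar = a * x ^ 2 + b * x * d + c * d ^ 2 + c' * σ ^ 2 := by
  set Q' := 2 * η + 4 * ν + 4 * a' - 4 * η * b' + 4 * η ^ 2 * c'
  set A := Q' / 4
  set B := (1 - κ) * d * (1 - b' + 2 * η * c') - (2 * ν + 2 * a' - η * b') * x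
  set C := (ν + a') * x ^ 2 + b' * (1 - κ) * x * d + c' * (1 - κ) ^ 2 * d ^ 2 + c' * σ ^ 2
  have hA : 0 < A := by positivity
  have hf_quadratic : ∀ u, f u = A * u ^ 2 + B * u + C := fun u => by rw [hf]; ring
  have hustar_vertex : ustar = -B / (2 * A) := by
    rw [hustar, show η + 2 * ν + 2 * a' - 2 * η * b' + 2 * η ^ 2 * c' = 2 * A by
      simp only [A, Q']; ring]
    field_simp
    simp only [B]
    ring
  have hvertex_value : C - B ^ 2 / (4 * A) = a * x ^ 2 + b * x * d + c * d ^ 2 + c' * σ ^ 2 := by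
    rw [ha, hb, hc, show Q' = 4 * A by simp only [A]; ring]
    field_simp
    simp only [B, C]
    ring
  have hf_ustar : f ustar = C - B ^ 2 / (4 * A) := by
    rw [hf_quadratic, hustar_vertex, quadratic_eq_vertex_form hA.ne']
    ring
  refine ⟨fun u hu => ?_, hf_ustar.trans hvertex_value⟩
  rw [hf_ustar, hf_quadratic]
  exact quadratic_vertex_lt hA B C (hustar_vertex ▸ hu)

/-- **One-step minimization in the dynamic programming equation** (linear case `α = 1`).
The one-period cost plus quadratic continuation value has a unique global minimizer
`u*`, and the minimum value is again a quadratic form with the recursively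
defined coefficients `a`, `b`, `c`, plus the noise constant `c'σ²`. -/
theorem one_step_dp_minimization
    (η κ ν σ : ℝ) (hη : 0 < η) (hκ0 : 0 < κ) (hκ1 : κ ≤ 1) (hν : 0 ≤ ν) (hσ : 0 ≤ σ)
    (a' b' c' : ℝ)
    (hQ' : 0 < 2 * η + 4 * ν + 4 * a' - 4 * η * b' + 4 * η ^ 2 * c')
    (x d : ℝ) (f : ℝ → ℝ)
    (hf : ∀ u, f u = (1 - κ) * d * u + η / 2 * u ^ 2 + ν * (x - u) ^ 2 +
        a' * (x - u) ^ 2 + b' * (x - u) * ((1 - κ) * d + η * u) +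
        c' * ((1 - κ) * d + η * u) ^ 2 + c' * σ ^ 2)
    (ustar : ℝ)
    (hustar : ustar = ((2 * ν + 2 * a' - η * b') * x -
        (1 - b' + 2 * η * c') * (1 - κ) * d) /
        (η + 2 * ν + 2 * a' - 2 * η * b' + 2 * η ^ 2 * c'))
    (a b c : ℝ)
    (ha : a = ν + a' - (2 * ν + 2 * a' - η * b') ^ 2 /
        (2 * η + 4 * ν + 4 * a' - 4 * η * b' + 4 * η ^ 2 * c'))
    (hb : b = (1 - κ) * b' +
        2 * (1 - κ) * (2 * ν + 2 * a' - η * b') * (1 - b' + 2 * η * c') /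
        (2 * η + 4 * ν + 4 * a' - 4 * η * b' + 4 * η ^ 2 * c'))
    (hc : c = (1 - κ) ^ 2 * c' - (1 - κ) ^ 2 * (1 - b' + 2 * η * c') ^ 2 /
        (2 * η + 4 * ν + 4 * a' - 4 * η * b' + 4 * η ^ 2 * c')) :
    (∀ u : ℝ, u ≠ ustar → f ustar < f u) ∧
      f ustar = a * x ^ 2 + b * x * d + c * d ^ 2 + c' * σ ^ 2 :=
  one_step_dp_minimization_general η κ ν σ a' b' c' hQ' x d f hf ustar hustar a b c ha hb hc
end

section
/- Fix N ≥ 4, η > 0, κ ∈ (0,1], ν ≥ 0 (so that the denominator 2κη − κ²η − 2κν + 2ν = κη(2−κ) + 2ν(1−κ) > 0), X₀ > 0, d₀ ∈ ℝ, α = 1, σ = 0. Let (u_n)_{n=1,...,N} be real numbers, and define X_n := X₀ − Σ_{j=1}^n u_j and D₀ := d₀, D_n := (1−κ)D_{n−1} + η u_n. Suppose there exists λ ∈ ℝ such that for every i = 1,...,N−1: λκ = κ(2−κ)(η u_i + (1−κ)D_{i−1}) − 2νκ Σ_{n=i+1}^N X_n − 2ν X_i (the first-order conditions of the Lagrangian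 for minimizing the execution cost under the constraint Σ_{n=1}^N u_n = X₀). Then the trades satisfy the linear recursion u_i = ã·u_{i−1} + b̃·D_{i−2} + c̃·X_{i−2} for all i = 2,...,N−1, where ã = κ(2κη − κ²η + 2ν)/(2κη − κ²η − 2κν + 2ν), b̃ = κ²(2 − 3κ + κ²)/(2κη − κ²η − 2κν + 2ν), c̃ = −2κν/(2κη − κ²η − 2κν + 2ν). -/
/-!
Subtracting the first-order condition at `i` from the one at `i - 1` removes the multiplier
and telescopes the tail sum `∑_{n > i} X_n` to a single term `X_i`. Eliminating `D_{i-1}`,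
`X_i` and `X_{i-1}` in favour of `D_{i-2}`, `X_{i-2}` and the trades leaves a linear equation
for `u_i` whose leading coefficient is the denominator `κη(2 - κ) + 2ν(1 - κ) > 0`.
-/

open Finset

lemma inventory_succ {N m : ℕ} {X₀ : ℝ} {u X : ℕ → ℝ}
    (hX : ∀ n, n ≤ N → X n = X₀ - ∑ j ∈ Icc 1 n, u j) (hm : m + 1 ≤ N) :
    X (m + 1) = X m - u (m + 1) := by
  rw [hX (m + 1) hm, hX m (by omega), sum_Icc_succ_top (by omega)]
  ring

lemma sum_Icc_eq_add_sum_Icc_succ {M : Type*} [AddCommMonoid M] (f : ℕ → M) {a b : ℕ}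
    (h : a ≤ b) : ∑ n ∈ Icc a b, f n = f a + ∑ n ∈ Icc (a + 1) b, f n := by
  rw [← add_sum_Ioc_eq_sum_Icc h, Icc_add_one_left_eq_Ioc]

lemma recursion_denom_pos {η κ ν : ℝ} (hη : 0 < η) (hκ0 : 0 < κ) (hκ1 : κ ≤ 1) (hν : 0 ≤ ν) :
    0 < 2 * κ * η - κ ^ 2 * η - 2 * κ * ν + 2 * ν := by
  have hηκ : 0 < κ * η * (2 - κ) := mul_pos (mul_pos hκ0 hη) (by linarith)
  have hνκ : 0 ≤ ν * (1 - κ) := mul_nonneg hν (sub_nonneg.2 hκ1)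
  linarith

lemma trade_eq_of_consecutive_foc {η κ ν lam u₁ u₂ d x S : ℝ}
    (hden : 2 * κ * η - κ ^ 2 * η - 2 * κ * ν + 2 * ν ≠ 0)
    (hprev : lam * κ = κ * (2 - κ) * (η * u₁ + (1 - κ) * d) -
      2 * ν * κ * (x - u₁ - u₂ + S) - 2 * ν * (x - u₁))
    (hcur : lam * κ = κ * (2 - κ) * (η * u₂ + (1 - κ) * ((1 - κ) * d + η * u₁)) -
      2 * ν * κ * S - 2 * ν * (x - u₁ - u₂)) :
    u₂ = κ * (2 * κ * η - κ ^ 2 * η + 2 * ν) /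
            (2 * κ * η - κ ^ 2 * η - 2 * κ * ν + 2 * ν) * u₁ +
          κ ^ 2 * (2 - 3 * κ + κ ^ 2) /
            (2 * κ * η - κ ^ 2 * η - 2 * κ * ν + 2 * ν) * d +
          (-2 * κ * ν) / (2 * κ * η - κ ^ 2 * η - 2 * κ * ν + 2 * ν) * x := by
  rw [div_mul_eq_mul_div, div_mul_eq_mul_div, div_mul_eq_mul_div, ← add_div, ← add_div,
    eq_div_iff hden]
  linear_combination hprev - hcur

theorem foc_implies_recursion_general
    (N : ℕ)
    (η κ ν : ℝ) (hη : 0 < η) (hκ0 : 0 < κ) (hκ1 : κ ≤ 1) (hν : 0 ≤ ν)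
    (X₀ : ℝ)
    (u X D : ℕ → ℝ)
    (hX : ∀ n, n ≤ N → X n = X₀ - ∑ j ∈ Finset.Icc 1 n, u j)
    (hD : ∀ n, 1 ≤ n → n ≤ N → D n = (1 - κ) * D (n - 1) + η * u n)
    (lam : ℝ)
    (hFOC : ∀ i, 1 ≤ i → i ≤ N - 1 →
      lam * κ = κ * (2 - κ) * (η * u i + (1 - κ) * D (i - 1)) -
        2 * ν * κ * ∑ n ∈ Finset.Icc (i + 1) N, X n - 2 * ν * X i) :
    0 < 2 * κ * η - κ ^ 2 * η - 2 * κ * ν + 2 * ν ∧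
    ∀ i, 2 ≤ i → i ≤ N - 1 →
      u i = κ * (2 * κ * η - κ ^ 2 * η + 2 * ν) /
              (2 * κ * η - κ ^ 2 * η - 2 * κ * ν + 2 * ν) * u (i - 1) +
            κ ^ 2 * (2 - 3 * κ + κ ^ 2) /
              (2 * κ * η - κ ^ 2 * η - 2 * κ * ν + 2 * ν) * D (i - 2) +
            (-2 * κ * ν) /
              (2 * κ * η - κ ^ 2 * η - 2 * κ * ν + 2 * ν) * X (i - 2) := by
  have hden := recursion_denom_pos hη hκ0 hκ1 hν
  refine ⟨hden, fun i hi hiN => ?_⟩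
  obtain ⟨k, rfl⟩ : ∃ k, i = k + 2 := ⟨i - 2, by omega⟩
  have hprev := hFOC (k + 1) (by omega) (by omega)
  have hcur := hFOC (k + 2) (by omega) (by omega)
  simp only [show k + 2 - 1 = k + 1 from rfl, show k + 2 - 2 = k from rfl,
    show k + 1 - 1 = k from rfl, show k + 1 + 1 = k + 2 from rfl] at hprev hcur ⊢
  rw [sum_Icc_eq_add_sum_Icc_succ _ (by omega : k + 2 ≤ N)] at hprev
  rw [hD (k + 1) (by omega) (by omega)] at hcur
  rw [inventory_succ hX (m := k + 1) (by omega), inventory_succ hX (m := k) (by omega)]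
    at hprev hcur
  exact trade_eq_of_consecutive_foc hden.ne' hprev hcur

/-- **First-order conditions imply the three-term recursion for the trades**
(deterministic linear problem, proof of Proposition 3.2): if the Lagrangian
stationarity conditions hold for `i = 1, …, N−1`, then the trades satisfy the
linear recursion `u_i = ã u_{i−1} + b̃ D_{i−2} + c̃ X_{i−2}` for `i = 2, …, N−1`. -/
theorem foc_implies_recursion
    (N : ℕ) (hN : 4 ≤ N)
    (η κ ν : ℝ) (hη : 0 < η) (hκ0 : 0 < κ) (hκ1 : κ ≤ 1) (hν : 0 ≤ ν)
    (X₀ d₀ : ℝ) (hX₀ : 0 < X₀)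
    (u X D : ℕ → ℝ)
    (hX : ∀ n, n ≤ N → X n = X₀ - ∑ j ∈ Finset.Icc 1 n, u j)
    (hD0 : D 0 = d₀)
    (hD : ∀ n, 1 ≤ n → n ≤ N → D n = (1 - κ) * D (n - 1) + η * u n)
    (lam : ℝ)
    (hFOC : ∀ i, 1 ≤ i → i ≤ N - 1 →
      lam * κ = κ * (2 - κ) * (η * u i + (1 - κ) * D (i - 1)) -
        2 * ν * κ * ∑ n ∈ Finset.Icc (i + 1) N, X n - 2 * ν * X i) :
    0 < 2 * κ * η - κ ^ 2 * η - 2 * κ * ν + 2 * ν ∧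
    ∀ i, 2 ≤ i → i ≤ N - 1 →
      u i = κ * (2 * κ * η - κ ^ 2 * η + 2 * ν) /
              (2 * κ * η - κ ^ 2 * η - 2 * κ * ν + 2 * ν) * u (i - 1) +
            κ ^ 2 * (2 - 3 * κ + κ ^ 2) /
              (2 * κ * η - κ ^ 2 * η - 2 * κ * ν + 2 * ν) * D (i - 2) +
            (-2 * κ * ν) /
              (2 * κ * η - κ ^ 2 * η - 2 * κ * ν + 2 * ν) * X (i - 2) :=
  foc_implies_recursion_general N η κ ν hη hκ0 hκ1 hν X₀ u X D hX hD lam hFOC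
end
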